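/- arXiv:2508.13420 — 2 statements merged into one kernel-verified Lean document; each statement's English description precedes it below -/
import Mathlib

section
/- Let G be an infinite compact metrizable abelian topological group and g₀ ∈ G with {n·g₀ : n ∈ ℕ} dense in G. Let U₀, U₁ ⊆ G be disjoint open sets such that every point of B := G ∖ (U₀ ∪ U₁) lies in the closure of U₀ and in the closure of U₁. Let x₀ : ℕ → Fin 2 satisfy n·g₀ ∈ U_{x₀(n)} for all n ∈ ℕ (in particular n·g₀ ∉ B for all n), and suppose the orbit closure X of x₀ is a minimal subshift. Then for every x ∈ X there exist y ∈ G and a partition of B into two disjoint sets B₀ and B₁ such that for all n ∈ ℕ and each i ∈ {0,1}: x(n) = i if and only if y + n·g₀ ∈ U_i ∪ B_i. -/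
/-!
Pick shifts of `x₀` accumulating at `x`; by compactness the corresponding points `m • g₀` have a
cluster point `y`. If `y + n • g₀` lies in the open set `U i`, then so does `(m + n) • g₀` for some
such `m` with `x₀ (m + n) = x n`, which forces `x n = i`. On the boundary, label `y + n • g₀` by
`x n` and every other point by `0`. This is well defined because `n • g₀ = n' • g₀` makes `x₀`,
hence every point of its orbit closure, agree at `n` and `n'`.
-/

open Set

abbrev Seq2 := ℕ → Fin 2

def shiftMap (x : Seq2) : Seq2 := fun n => x (n + 1)

def orbitClosure (x : Seq2) : Set Seq2 :=
  closure {y : Seq2 | ∃ m : ℕ, y = fun n => x (m + n)}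

open Filter Topology Function

lemma eq_of_mem_of_disjoint_zero_one {α : Type*} {U : Fin 2 → Set α} (hdisj : Disjoint (U 0) (U 1))
    {a : α} {i j : Fin 2} (hi : a ∈ U i) (hj : a ∈ U j) : i = j := by
  fin_cases i <;> fin_cases j
  · rfl
  · exact (hdisj.ne_of_mem hi hj rfl).elim
  · exact (hdisj.ne_of_mem hj hi rfl).elim
  · rfl

lemma orbitClosure_eq_closure_range (x₀ : Seq2) :
    orbitClosure x₀ = closure (range fun m n => x₀ (m + n)) := by
  simp only [orbitClosure, range, eq_comm]

lemma apply_eq_apply_of_mem_orbitClosure {x₀ x : Seq2} {n n' : ℕ}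
    (h : ∀ m, x₀ (m + n) = x₀ (m + n')) (hx : x ∈ orbitClosure x₀) : x n = x n' := by
  have hsub : orbitClosure x₀ ⊆ {z : Seq2 | z n = z n'} :=
    closure_minimal (by rintro _ ⟨m, rfl⟩; exact h m)
      (isClosed_eq (continuous_apply n) (continuous_apply n'))
  exact hsub hx

section Coding

variable {G : Type*} {g₀ : G} {U : Fin 2 → Set G} {x₀ x : Seq2}

lemma factorsThrough_of_mem_orbitClosure [AddLeftCancelMonoid G] (hdisj : Disjoint (U 0) (U 1))
    (hx₀ : ∀ n : ℕ, n • g₀ ∈ U (x₀ n)) (hx : x ∈ orbitClosure x₀) (y : G) :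
    FactorsThrough x (fun n : ℕ => y + n • g₀) := by
  intro n n' h
  refine apply_eq_apply_of_mem_orbitClosure (fun m => ?_) hx
  have hnsmul : (m + n) • g₀ = (m + n') • g₀ := by
    rw [add_nsmul, add_nsmul, add_left_cancel h]
  exact eq_of_mem_of_disjoint_zero_one hdisj (hx₀ _) (hnsmul ▸ hx₀ _)

lemma exists_forall_mem_imp_apply_eq_of_mem_orbitClosure [AddMonoid G] [TopologicalSpace G]
    [ContinuousAdd G] [CompactSpace G] (hopen : ∀ i, IsOpen (U i)) (hdisj : Disjoint (U 0) (U 1))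
    (hx₀ : ∀ n : ℕ, n • g₀ ∈ U (x₀ n)) (hx : x ∈ orbitClosure x₀) :
    ∃ y : G, ∀ (n : ℕ) (i : Fin 2), y + n • g₀ ∈ U i → x n = i := by
  set shift : ℕ → Seq2 := fun m n => x₀ (m + n)
  rw [orbitClosure_eq_closure_range] at hx
  have := comap_neBot_iff_frequently.2 (mem_closure_iff_frequently.1 hx)
  obtain ⟨y, -, hy⟩ := isCompact_univ.exists_mapClusterPt (f := comap shift (𝓝 x))
    (u := fun m : ℕ => m • g₀) (le_principal_iff.2 univ_mem)
  refine ⟨y, fun n i hyn => ?_⟩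
  have hnear : ∀ᶠ g in 𝓝 y, g + n • g₀ ∈ U i :=
    (continuous_add_const (n • g₀)).continuousAt.eventually_mem ((hopen i).mem_nhds hyn)
  have hagree : ∀ᶠ m in comap shift (𝓝 x), shift m n ∈ ({x n} : Set (Fin 2)) :=
    (((continuous_apply n).tendsto x).comp tendsto_comap).eventually
      ((isOpen_discrete _).mem_nhds rfl)
  obtain ⟨m, hmU, hmx⟩ := ((hy.frequently hnear).and_eventually hagree).exists
  rw [← add_nsmul] at hmU
  rw [← hmx]
  exact eq_of_mem_of_disjoint_zero_one hdisj (hx₀ _) hmU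

end Coding

lemma eq_iff_mem_union_inter_preimage {α : Type*} {U : Fin 2 → Set α} (c : α → Fin 2) {g : α}
    (hg : ∀ i, g ∈ U i → c g = i) (i : Fin 2) :
    c g = i ↔ g ∈ U i ∪ ((U 0 ∪ U 1)ᶜ ∩ c ⁻¹' {i}) := by
  constructor
  · intro hci
    by_cases hU : g ∈ U 0 ∪ U 1
    · obtain ⟨j, hj⟩ : ∃ j, g ∈ U j := hU.elim (⟨0, ·⟩) (⟨1, ·⟩)
      left
      rwa [← hci, hg j hj]
    · exact Or.inr ⟨hU, hci⟩
  · rintro (h | ⟨-, h⟩)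
    exacts [hg i h, h]

theorem stmt10_general {G : Type*} [AddCommGroup G] [TopologicalSpace G] [IsTopologicalAddGroup G]
    [CompactSpace G]
    (g₀ : G)
    (U : Fin 2 → Set G) (hopen : ∀ i, IsOpen (U i)) (hdisj : Disjoint (U 0) (U 1))
    (x₀ : Seq2) (hx₀ : ∀ n : ℕ, n • g₀ ∈ U (x₀ n)) :
    ∀ x ∈ orbitClosure x₀, ∃ (y : G) (B : Fin 2 → Set G),
      Disjoint (B 0) (B 1) ∧ B 0 ∪ B 1 = (U 0 ∪ U 1)ᶜ ∧
      ∀ (n : ℕ) (i : Fin 2), x n = i ↔ y + n • g₀ ∈ U i ∪ B i := by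
  intro x hx
  obtain ⟨y, hy⟩ := exists_forall_mem_imp_apply_eq_of_mem_orbitClosure hopen hdisj hx₀ hx
  set c : G → Fin 2 := extend (fun n : ℕ => y + n • g₀) x 0
  have hc : ∀ n, c (y + n • g₀) = x n :=
    (factorsThrough_of_mem_orbitClosure hdisj hx₀ hx y).extend_apply 0
  have hlabels : ({0} ∪ {1} : Set (Fin 2)) = univ := by
    ext j; fin_cases j <;> simp
  refine ⟨y, fun i => (U 0 ∪ U 1)ᶜ ∩ c ⁻¹' {i}, ?_, ?_, fun n i => ?_⟩
  · exact ((disjoint_singleton.2 (by decide)).preimage c).mono inter_subset_right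
      inter_subset_right
  · rw [← inter_union_distrib_left, ← preimage_union, hlabels, preimage_univ, inter_univ]
  · rw [← hc n]
    exact eq_iff_mem_union_inter_preimage c (fun j hj => (hc n).trans (hy n j hj)) i

/-- every point of a minimal subshift given by coding a dense group
rotation orbit is itself a coding sequence (Theorem 3.7 of the paper). -/
theorem stmt10 {G : Type*} [AddCommGroup G] [TopologicalSpace G] [IsTopologicalAddGroup G]
    [CompactSpace G] [TopologicalSpace.MetrizableSpace G] [Infinite G]
    (g₀ : G) (hdense : Dense {g : G | ∃ n : ℕ, g = n • g₀})
    (U : Fin 2 → Set G) (hopen : ∀ i, IsOpen (U i)) (hdisj : Disjoint (U 0) (U 1))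
    (hbd : ∀ b ∈ (U 0 ∪ U 1)ᶜ, b ∈ closure (U 0) ∧ b ∈ closure (U 1))
    (x₀ : Seq2) (hx₀ : ∀ n : ℕ, n • g₀ ∈ U (x₀ n))
    (hmin : ∀ Z ⊆ orbitClosure x₀, IsClosed Z → (∀ y ∈ Z, shiftMap y ∈ Z) →
      Z.Nonempty → Z = orbitClosure x₀) :
    ∀ x ∈ orbitClosure x₀, ∃ (y : G) (B : Fin 2 → Set G),
      Disjoint (B 0) (B 1) ∧ B 0 ∪ B 1 = (U 0 ∪ U 1)ᶜ ∧
      ∀ (n : ℕ) (i : Fin 2), x n = i ↔ y + n • g₀ ∈ U i ∪ B i :=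
  stmt10_general g₀ U hopen hdisj x₀ hx₀
end

section
/- If x : ℕ → Fin 2 contains arbitrarily long blocks of consecutive 0s and arbitrarily long blocks of consecutive 1s (for every L ∈ ℕ there exist m₀, m₁ ∈ ℕ with x(m₀ + i) = 0 for all 0 ≤ i < L and x(m₁ + i) = 1 for all 0 ≤ i < L), then x is not pattern Sturmian; in fact there exists n ≥ 1 with p*_x(n) > 2n. -/
/-
The window `{0, 1, T}` already carries seven of the eight binary patterns once `T ≥ 2` is chosen
so that some occurrence of `01` is followed by a `0` at distance `T`: that occurrence gives `010`,
long runs of `b` give `bbb`, the end of a run gives `bbc` and its beginning gives `cbb`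
(where `c ≠ b`). Hence `pstar x 3 ≥ 7 > 6`.
-/

open Set

def patLang (x : Seq2) (τ : Finset ℕ) : Set ((s : τ) → Fin 2) :=
  {w | ∃ m : ℕ, ∀ s : τ, w s = x (m + (s : ℕ))}

noncomputable def pstar (x : Seq2) (n : ℕ) : ℕ :=
  sSup {c : ℕ | ∃ τ : Finset ℕ, τ.card = n ∧ (patLang x τ).ncard = c}

def PatternSturmian (x : Seq2) : Prop := ∀ n : ℕ, 1 ≤ n → pstar x n = 2 * n

open Filter

variable {α : Type*}

def HasLongRuns (x : ℕ → α) (b : α) : Prop :=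
  ∀ L : ℕ, ∃ m, ∀ i < L, x (m + i) = b

namespace HasLongRuns

variable {x : ℕ → α} {b : α}

theorem exists_ge (h : HasLongRuns x b) (N L : ℕ) : ∃ m, N ≤ m ∧ ∀ i < L, x (m + i) = b := by
  obtain ⟨m, hm⟩ := h (N + L)
  exact ⟨m + N, le_add_self, fun i hi => by rw [add_assoc]; exact hm _ (by omega)⟩

theorem frequently_eq (h : HasLongRuns x b) : ∃ᶠ n in atTop, x n = b :=
  frequently_atTop.mpr fun N => by simpa using h.exists_ge N 1

theorem frequently_ne {c : α} (h : HasLongRuns x c) (hcb : c ≠ b) : ∃ᶠ n in atTop, x n ≠ b :=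
  h.frequently_eq.mono fun _ hn => hn ▸ hcb

theorem exists_run_then_ne (h : HasLongRuns x b) (hne : ∃ᶠ n in atTop, x n ≠ b) (L : ℕ) :
    ∃ a, (∀ i < L, x (a + i) = b) ∧ x (a + L) ≠ b := by
  classical
  obtain ⟨m, hm⟩ := h L
  have hex : ∃ k, x (m + k) ≠ b := by
    obtain ⟨p, hmp, hp⟩ := frequently_atTop.mp hne m
    exact ⟨p - m, by rwa [Nat.add_sub_cancel' hmp]⟩
  -- the first offset `d` at which `x` leaves `b` is `≥ L`, and the `L` positions before it are `b`
  set d := Nat.find hex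
  have hLd : L ≤ d := not_lt.mp fun hdL => Nat.find_spec hex (hm d hdL)
  refine ⟨m + (d - L), fun i hi => ?_, ?_⟩
  · rw [add_assoc]
    exact not_not.mp (Nat.find_min hex (by omega))
  · rw [add_assoc, Nat.sub_add_cancel hLd]
    exact Nat.find_spec hex

theorem exists_ne_then_run (h : HasLongRuns x b) (hne : ∃ p, x p ≠ b) (L : ℕ) :
    ∃ a, x a ≠ b ∧ ∀ i, 0 < i → i ≤ L → x (a + i) = b := by
  classical
  obtain ⟨p, hp⟩ := hne
  obtain ⟨m, hpm, hm⟩ := h.exists_ge (p + 1) L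
  -- `a` is the last position before the run at `m` that is not `b`
  set a := Nat.findGreatest (fun j => x j ≠ b) m
  have ha : x a ≠ b := Nat.findGreatest_spec (P := fun j => x j ≠ b) (by omega) hp
  refine ⟨a, ha, fun i hi hiL => ?_⟩
  have ham : a < m := (Nat.findGreatest_le m).lt_of_ne fun ham : a = m =>
    ha (by rw [ham]; exact hm 0 (by omega))
  rcases le_or_gt (a + i) m with hle | hgt
  · exact not_not.mp (Nat.findGreatest_is_greatest (P := fun j => x j ≠ b) (by omega) hle)
  · simpa [show m + (a + i - m) = a + i by omega] using hm (a + i - m) (by omega)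

theorem exists_eq_ne_eq (h : HasLongRuns x b) (hne : ∃ᶠ n in atTop, x n ≠ b) :
    ∃ T, 2 ≤ T ∧ ∃ a, x a = b ∧ x (a + 1) ≠ b ∧ x (a + T) = b := by
  obtain ⟨a, ha, ha1⟩ := h.exists_run_then_ne hne 1
  obtain ⟨p, hap, hp⟩ := frequently_atTop.mp h.frequently_eq (a + 2)
  exact ⟨p - a, by omega, a, ha 0 one_pos, ha1, by rwa [Nat.add_sub_cancel' (by omega)]⟩

end HasLongRuns

theorem ncard_patLang_le (x : Seq2) (τ : Finset ℕ) : (patLang x τ).ncard ≤ 2 ^ τ.card :=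
  (ncard_le_ncard (subset_univ _)).trans (by simp [ncard_univ])

theorem ncard_patLang_le_pstar (x : Seq2) (τ : Finset ℕ) :
    (patLang x τ).ncard ≤ pstar x τ.card :=
  le_csSup ⟨2 ^ τ.card, fun _ ⟨_, hτ, hc⟩ => hc ▸ hτ ▸ ncard_patLang_le x _⟩ ⟨τ, rfl, rfl⟩

theorem ncard_range_le_ncard_patLang (x : Seq2) (τ : Finset ℕ) {β : Type*}
    (g : ((s : τ) → Fin 2) → β) :
    (range fun m => g fun s : τ => x (m + s)).ncard ≤ (patLang x τ).ncard := by
  refine (ncard_le_ncard ?_ ((toFinite _).image g)).trans (ncard_image_le (toFinite _))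
  rintro _ ⟨m, rfl⟩
  exact ⟨_, ⟨m, fun _ => rfl⟩, rfl⟩

theorem compl_singleton_subset_range_triple {x : Seq2} (hx : ∀ b, HasLongRuns x b) {T a : ℕ}
    (hT : 2 ≤ T) (ha : x a = 0) (ha1 : x (a + 1) = 1) (haT : x (a + T) = 0) :
    ({(1, 0, 1)}ᶜ : Set (Fin 2 × Fin 2 × Fin 2)) ⊆ range fun m => (x m, x (m + 1), x (m + T)) := by
  set R := range fun m => (x m, x (m + 1), x (m + T))
  have hrun : ∀ b c : Fin 2, c ≠ b → (b, b, b) ∈ R ∧ (b, b, c) ∈ R ∧ (c, b, b) ∈ R := by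
    intro b c hcb
    have hne := (hx c).frequently_ne hcb
    have hc : ∀ y, y ≠ b → y = c := by omega
    obtain ⟨m₁, hm₁⟩ := hx b (T + 1)
    obtain ⟨m₂, hm₂, hm₂T⟩ := (hx b).exists_run_then_ne hne T
    obtain ⟨m₃, hm₃, hm₃b⟩ := (hx b).exists_ne_then_run hne.exists T
    refine ⟨⟨m₁, ?_⟩, ⟨m₂, ?_⟩, ⟨m₃, ?_⟩⟩ <;> simp only [Prod.mk.injEq]
    · exact ⟨hm₁ 0 (by omega), hm₁ 1 (by omega), hm₁ T (by omega)⟩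
    · exact ⟨hm₂ 0 (by omega), hm₂ 1 (by omega), hc _ hm₂T⟩
    · exact ⟨hc _ hm₃, hm₃b 1 one_pos (by omega), hm₃b T (by omega) le_rfl⟩
  rintro ⟨t₀, t₁, t₂⟩ ht
  fin_cases t₀ <;> fin_cases t₁ <;> fin_cases t₂
  · exact (hrun 0 1 one_ne_zero).1
  · exact (hrun 0 1 one_ne_zero).2.1
  · exact ⟨a, by simp only [ha, ha1, haT]; rfl⟩
  · exact (hrun 1 0 zero_ne_one).2.2
  · exact (hrun 0 1 one_ne_zero).2.2
  · exact absurd rfl ht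
  · exact (hrun 1 0 zero_ne_one).2.1
  · exact (hrun 1 0 zero_ne_one).1

theorem seven_le_pstar_three {x : Seq2} (hx : ∀ b, HasLongRuns x b) : 7 ≤ pstar x 3 := by
  obtain ⟨T, hT, a, ha, ha1, haT⟩ := (hx 0).exists_eq_ne_eq ((hx 1).frequently_ne one_ne_zero)
  set τ : Finset ℕ := {0, 1, T}
  have hτ : τ.card = 3 := by
    rw [Finset.card_insert_of_notMem (by simp; omega), Finset.card_pair (by omega)]
  calc 7 = ({(1, 0, 1)}ᶜ : Set (Fin 2 × Fin 2 × Fin 2)).ncard := by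
        rw [ncard_eq_toFinset_card']; rfl
    _ ≤ (range fun m => (x m, x (m + 1), x (m + T))).ncard :=
        ncard_le_ncard <|
          compl_singleton_subset_range_triple hx hT ha (Fin.eq_one_of_ne_zero _ ha1) haT
    _ ≤ (patLang x τ).ncard :=
        ncard_range_le_ncard_patLang x τ fun w =>
          (w ⟨0, by simp [τ]⟩, w ⟨1, by simp [τ]⟩, w ⟨T, by simp [τ]⟩)
    _ ≤ pstar x 3 := hτ ▸ ncard_patLang_le_pstar x τ

/-- a sequence with arbitrarily long blocks of consecutive `0`s and
arbitrarily long blocks of consecutive `1`s is not pattern Sturmian; in fact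
`pstar x n > 2n` for some `n ≥ 1` (Lemma 6.6 of the paper). -/
theorem stmt16 (x : Seq2)
    (hblocks : ∀ L : ℕ, ∃ m₀ m₁ : ℕ,
      (∀ i < L, x (m₀ + i) = 0) ∧ (∀ i < L, x (m₁ + i) = 1)) :
    ¬ PatternSturmian x ∧ ∃ n : ℕ, 1 ≤ n ∧ 2 * n < pstar x n := by
  have hx : ∀ b, HasLongRuns x b := by
    intro b L
    obtain ⟨m₀, m₁, h₀, h₁⟩ := hblocks L
    fin_cases b
    exacts [⟨m₀, h₀⟩, ⟨m₁, h₁⟩]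
  have hlt : 2 * 3 < pstar x 3 := seven_le_pstar_three hx
  exact ⟨fun hS => hlt.ne' (hS 3 (by norm_num)), 3, by norm_num, hlt⟩
end
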